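/- arXiv:0811.4764 — 2 statements merged into one kernel-verified Lean document; each statement's English description precedes it below -/
import Mathlib

section
/- Let τ be a type and M a submonoid of Hyp(τ). For any variety V of type τ the following conditions are equivalent: (i) V = H_M Mod H_M Id V; (ii) χ_M^A[V] = V; (iii) Id V = H_M Id V; (iv) χ_M^E[Id V] = Id V. -/
/-!
Common framework: terms of a fixed type `τ = (ar i)_{i : I}`, algebras,
identities, hypersubstitutions, multi-hypersubstitutions and colorations,
following Denecke–Koppitz–Shtrakov, "Multi-hypersubstitutions and colored
solid varieties".
-/

namespace ColoredSolid

/-- Terms of type `τ` (arities `ar`) over the countably infinite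
variable set `X = {x₀, x₁, …}` (variables indexed by `ℕ`). -/
inductive Term (I : Type) (ar : I → ℕ) : Type
  | var : ℕ → Term I ar
  | app : (i : I) → (Fin (ar i) → Term I ar) → Term I ar

variable {I : Type} {ar : I → ℕ}

/-- The set of (indices of) variables occurring in a term. -/
def Term.varSet : Term I ar → Set ℕ
  | .var n => {n}
  | .app _ ts => ⋃ k, (ts k).varSet

/-- Simultaneous substitution of terms for variables. -/
def subst (θ : ℕ → Term I ar) : Term I ar → Term I ar
  | .var n => θ n
  | .app i ts => .app i fun k => subst θ (ts k)

/-- Pad a `Fin (ar i)`-indexed family of terms to a total substitution. -/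
def pad {i : I} (g : Fin (ar i) → Term I ar) : ℕ → Term I ar :=
  fun j => if h : j < ar i then g ⟨j, h⟩ else .var j

/-- The extension `σ̂` of a hypersubstitution to all terms. -/
def hat (σ : (i : I) → Term I ar) : Term I ar → Term I ar
  | .var n => .var n
  | .app i ts => subst (pad fun k => hat σ (ts k)) (σ i)

/-- A hypersubstitution is proper when each `σ(fᵢ)` is an `nᵢ`-ary term,
i.e. uses only the variables `x₀, …, x_{nᵢ-1}`. -/
def Proper (σ : (i : I) → Term I ar) : Prop :=
  ∀ i, ∀ n ∈ (σ i).varSet, n < ar i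

/-- `Hyp I ar` : the hypersubstitutions of type `τ`. -/
def Hyp (I : Type) (ar : I → ℕ) : Type := {σ : (i : I) → Term I ar // Proper σ}

/-- The identity hypersubstitution (as a raw function). -/
def hypIdFun : (i : I) → Term I ar := fun i => .app i fun k => .var k.val

lemma proper_hypIdFun : Proper (hypIdFun (I := I) (ar := ar)) := by
  intro i n hn
  simp only [hypIdFun, Term.varSet, Set.mem_iUnion, Set.mem_singleton_iff] at hn
  obtain ⟨k, rfl⟩ := hn
  exact k.isLt

/-- The identity hypersubstitution `σ_id`. -/
def hypId : Hyp I ar := ⟨hypIdFun, proper_hypIdFun⟩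

lemma varSet_subst (θ : ℕ → Term I ar) (t : Term I ar) :
    (subst θ t).varSet ⊆ ⋃ n ∈ t.varSet, (θ n).varSet := by
  induction t with
  | var n => simp [subst, Term.varSet]
  | app i ts ih =>
    intro m hm
    simp only [subst, Term.varSet, Set.mem_iUnion] at hm
    obtain ⟨k, hk⟩ := hm
    have := ih k hk
    simp only [Set.mem_iUnion, Term.varSet] at this ⊢
    obtain ⟨n, hn1, hn2⟩ := this
    exact ⟨n, ⟨⟨k, hn1⟩, hn2⟩⟩

lemma varSet_hat {σ : (i : I) → Term I ar} (hσ : Proper σ) :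
    ∀ t : Term I ar, (hat σ t).varSet ⊆ t.varSet := by
  intro t
  induction t with
  | var n => simp [hat]
  | app i ts ih =>
    intro m hm
    rw [hat] at hm
    have hmem := varSet_subst _ _ hm
    simp only [Set.mem_iUnion] at hmem
    obtain ⟨n, hn, hm2⟩ := hmem
    have hlt := hσ i n hn
    simp only [pad, dif_pos hlt] at hm2
    have := ih ⟨n, hlt⟩ hm2
    simp only [Term.varSet, Set.mem_iUnion]
    exact ⟨⟨n, hlt⟩, this⟩

/-- Composition of hypersubstitutions (raw functions): `σ₁ ∘ₕ σ₂`. -/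
def hypCompFun (σ₁ σ₂ : (i : I) → Term I ar) : (i : I) → Term I ar := fun i => hat σ₁ (σ₂ i)

lemma proper_hypCompFun {σ₁ σ₂ : (i : I) → Term I ar} (h₁ : Proper σ₁) (h₂ : Proper σ₂) :
    Proper (hypCompFun σ₁ σ₂) :=
  fun i n hn => h₂ i n (varSet_hat h₁ (σ₂ i) hn)

/-- Composition of hypersubstitutions: `σ₁ ∘ₕ σ₂ := σ̂₁ ∘ σ₂`. -/
def hypComp (σ₁ σ₂ : Hyp I ar) : Hyp I ar :=
  ⟨hypCompFun σ₁.val σ₂.val, proper_hypCompFun σ₁.property σ₂.property⟩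

/-- `M` is a submonoid of the monoid `Hyp(τ)` of all hypersubstitutions. -/
def IsSubmonoid (M : Set (Hyp I ar)) : Prop :=
  hypId ∈ M ∧ ∀ σ₁ ∈ M, ∀ σ₂ ∈ M, hypComp σ₁ σ₂ ∈ M

/-- An algebra of type `τ`: a (nonempty) carrier together with an
`nᵢ`-ary operation for every operation symbol `fᵢ`. -/
structure Alg (I : Type) (ar : I → ℕ) where
  carrier : Type
  nonempty : Nonempty carrier
  op : ∀ i, (Fin (ar i) → carrier) → carrier

/-- Evaluation of a term in an algebra under a valuation of the variables. -/
def Alg.eval (A : Alg I ar) (v : ℕ → A.carrier) : Term I ar → A.carrier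
  | .var n => v n
  | .app i ts => A.op i fun k => A.eval v (ts k)

/-- Identities `s ≈ t` are pairs of terms. -/
abbrev Eqn (I : Type) (ar : I → ℕ) := Term I ar × Term I ar

/-- The identity `e` holds in the algebra `A`. -/
def holds (A : Alg I ar) (e : Eqn I ar) : Prop :=
  ∀ v : ℕ → A.carrier, A.eval v e.1 = A.eval v e.2

/-- `Id K` : the identities holding in every algebra of the class `K`. -/
def IdS (K : Set (Alg I ar)) : Set (Eqn I ar) := {e | ∀ A ∈ K, holds A e}

/-- `Mod Σ` : the class of algebras satisfying every identity of `Σ`. -/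
def ModS (E : Set (Eqn I ar)) : Set (Alg I ar) := {A | ∀ e ∈ E, holds A e}

/-- `χ_M^E[Σ] = {σ̂[u] ≈ σ̂[v] | u ≈ v ∈ Σ, σ ∈ M}`. -/
def chiE (M : Set (Hyp I ar)) (E : Set (Eqn I ar)) : Set (Eqn I ar) :=
  {e | ∃ σ ∈ M, ∃ uv ∈ E, e = (hat σ.val uv.1, hat σ.val uv.2)}

/-- The derived algebra `σ(𝒜)` (same carrier, operations `σ(fᵢ)^𝒜`). -/
noncomputable def derive (σ : (i : I) → Term I ar) (A : Alg I ar) : Alg I ar where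
  carrier := A.carrier
  nonempty := A.nonempty
  op i args := A.eval
    (fun j => if h : j < ar i then args ⟨j, h⟩ else Classical.choice A.nonempty) (σ i)

/-- `χ_M^A[K] = {σ(𝒜) | 𝒜 ∈ K, σ ∈ M}`. -/
def chiA (M : Set (Hyp I ar)) (K : Set (Alg I ar)) : Set (Alg I ar) :=
  {B | ∃ σ ∈ M, ∃ A ∈ K, B = derive σ.val A}

/-- `H_M Id K` : the `M`-hyperidentities of the class `K`. -/
def HId (M : Set (Hyp I ar)) (K : Set (Alg I ar)) : Set (Eqn I ar) :=
  {e | ∀ σ ∈ M, (hat σ.val e.1, hat σ.val e.2) ∈ IdS K}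

/-- `H_M Mod Σ` : the algebras `M`-hypersatisfying every identity of `Σ`. -/
def HMod (M : Set (Hyp I ar)) (E : Set (Eqn I ar)) : Set (Alg I ar) :=
  {A | ∀ σ ∈ M, ∀ uv ∈ E, holds A (hat σ.val uv.1, hat σ.val uv.2)}

/-!  Colorations and multi-hypersubstitutions. -/

/-- `addresses t` : the set of addresses of occurrences of operation symbols
in the term `t` (an address is the list of argument positions leading from
the root to the occurrence). -/
def addresses : Term I ar → Set (List ℕ)
  | .var _ => ∅
  | .app i ts => insert [] (⋃ k : Fin (ar i), (fun l => k.val :: l) '' addresses (ts k))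

/-- A coloration `C` of `W_τ(X)` assigns to every term `t` a coloration
`α_t` of its addresses (only the values on `addresses t` matter). -/
def Coloration (I : Type) (ar : I → ℕ) : Type := Term I ar → List ℕ → ℕ

/-- A multi-hypersubstitution is a map `ρ : ℕ → Hyp(τ)`; here, its
underlying raw function is extended to the subterms of a term, tracking the
address of the current subterm, with colors given by `α`. -/
def mhatAux (ρ : ℕ → (i : I) → Term I ar) (α : List ℕ → ℕ) : List ℕ → Term I ar → Term I ar
  | _, .var n => .var n
  | a, .app i ts =>
      subst (pad fun k => mhatAux ρ α (a ++ [k.val]) (ts k)) (ρ (α a) i)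

/-- `ρ̂_C[t]` : application of the multi-hypersubstitution `ρ` to the term
`t`, colored by `C`. -/
def mhat (C : Coloration I ar) (ρ : ℕ → Hyp I ar) (t : Term I ar) : Term I ar :=
  mhatAux (fun n => (ρ n).val) (C t) [] t

/-- `χ_C^e[Σ] = {ρ̂_C[u] ≈ ρ̂_C[v] | u ≈ v ∈ Σ, ρ ∈ Hyp(τ)^ℕ}`. -/
def chiCe (C : Coloration I ar) (E : Set (Eqn I ar)) : Set (Eqn I ar) :=
  {e | ∃ ρ : ℕ → Hyp I ar, ∃ uv ∈ E, e = (mhat C ρ uv.1, mhat C ρ uv.2)}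

/-- The iterates `χ_C^{e,n}` of `χ_C^e` (with `χ_C^{e,0} = χ_C^e`). -/
def chiCiter (C : Coloration I ar) : ℕ → Set (Eqn I ar) → Set (Eqn I ar)
  | 0, E => chiCe C E
  | n + 1, E => chiCe C (chiCiter C n E)

/-- `χ_C^E[Σ] = ⋃ₙ χ_C^{e,n}[Σ]`. -/
def chiCE (C : Coloration I ar) (E : Set (Eqn I ar)) : Set (Eqn I ar) :=
  ⋃ n, chiCiter C n E

/-- The derived algebra `ρ[𝒜]`, with operations
`fᵢ^{ρ[𝒜]} := (ρ̂_C[fᵢ(x₁,…,x_{nᵢ})])^𝒜`. -/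
noncomputable def deriveC (C : Coloration I ar) (ρ : ℕ → Hyp I ar) (A : Alg I ar) :
    Alg I ar where
  carrier := A.carrier
  nonempty := A.nonempty
  op i args := A.eval
    (fun j => if h : j < ar i then args ⟨j, h⟩ else Classical.choice A.nonempty)
    (mhat C ρ (.app i fun k => .var k.val))

/-- `χ_C^A[K] = {ρ[𝒜] | 𝒜 ∈ K, ρ ∈ Hyp(τ)^ℕ}`. -/
def chiCA (C : Coloration I ar) (K : Set (Alg I ar)) : Set (Alg I ar) :=
  {B | ∃ ρ : ℕ → Hyp I ar, ∃ A ∈ K, B = deriveC C ρ A}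

/-- `CMod Σ = {𝒜 | χ_C^E[Σ] ⊆ Id 𝒜}`. -/
def CMod (C : Coloration I ar) (E : Set (Eqn I ar)) : Set (Alg I ar) :=
  {A | chiCE C E ⊆ {e | holds A e}}

/-- `CId K = {s ≈ t | χ_C^E[{s ≈ t}] ⊆ Id K}`. -/
def CId (C : Coloration I ar) (K : Set (Alg I ar)) : Set (Eqn I ar) :=
  {e | chiCE C {e} ⊆ IdS K}

variable {I : Type} {ar : I → ℕ}

/-!
Everything rests on the translation `σ(𝒜) ⊨ s ≈ t ↔ 𝒜 ⊨ σ̂[s] ≈ σ̂[t]`, which gives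
`H_M Id K = Id χ_M^A[K]` and `χ_M^E[Σ] ⊆ Id K ↔ Σ ⊆ H_M Id K`. Since `σ_id ∈ M`, the
operators `χ_M^A`, `χ_M^E` are extensive and `H_M Id K ⊆ Id K`; since `M` is closed
under `∘ₕ` and `(σ₁ ∘ₕ σ₂)^ = σ̂₁ ∘ σ̂₂`, the class `χ_M^A[K]` satisfies `H_M Id K`.
-/

lemma eval_congr (A : Alg I ar) {v w : ℕ → A.carrier} :
    ∀ t : Term I ar, (∀ n ∈ t.varSet, v n = w n) → A.eval v t = A.eval w t
  | .var n, h => h n rfl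
  | .app i ts, h => by
    simp only [Alg.eval]
    congr 1
    funext k
    exact eval_congr A (ts k) fun n hn => h n (Set.mem_iUnion.2 ⟨k, hn⟩)

lemma subst_congr {θ θ' : ℕ → Term I ar} :
    ∀ t : Term I ar, (∀ n ∈ t.varSet, θ n = θ' n) → subst θ t = subst θ' t
  | .var n, h => h n rfl
  | .app i ts, h => by
    simp only [subst]
    congr 1
    funext k
    exact subst_congr (ts k) fun n hn => h n (Set.mem_iUnion.2 ⟨k, hn⟩)

lemma subst_subst (θ θ' : ℕ → Term I ar) :
    ∀ t : Term I ar, subst θ (subst θ' t) = subst (fun n => subst θ (θ' n)) t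
  | .var _ => rfl
  | .app i ts => by
    simp only [subst]
    congr 1
    funext k
    exact subst_subst θ θ' (ts k)

lemma eval_subst (A : Alg I ar) (v : ℕ → A.carrier) (θ : ℕ → Term I ar) :
    ∀ t : Term I ar, A.eval v (subst θ t) = A.eval (fun n => A.eval v (θ n)) t
  | .var _ => rfl
  | .app i ts => by
    simp only [subst, Alg.eval]
    congr 1
    funext k
    exact eval_subst A v θ (ts k)

@[simp]
lemma hat_hypId : ∀ t : Term I ar, hat (hypId : Hyp I ar).val t = t
  | .var _ => rfl
  | .app i ts => by
    show subst _ (Term.app i fun k => .var k.val) = _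
    simp only [subst]
    congr 1
    funext k
    simp only [pad, k.isLt, dif_pos, hat_hypId (ts k)]

lemma hat_subst {σ : (i : I) → Term I ar} (hσ : Proper σ) (θ : ℕ → Term I ar) :
    ∀ t : Term I ar, hat σ (subst θ t) = subst (fun n => hat σ (θ n)) (hat σ t)
  | .var _ => rfl
  | .app i ts => by
    simp only [subst, hat, subst_subst]
    apply subst_congr
    intro n hn
    have hlt := hσ i n hn
    simp only [pad, dif_pos hlt]
    exact hat_subst hσ θ (ts ⟨n, hlt⟩)

lemma hat_hypCompFun {σ₁ : (i : I) → Term I ar} (h₁ : Proper σ₁) (σ₂ : (i : I) → Term I ar) :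
    ∀ t : Term I ar, hat (hypCompFun σ₁ σ₂) t = hat σ₁ (hat σ₂ t)
  | .var _ => rfl
  | .app i ts => by
    simp only [hat, hypCompFun, hat_subst h₁]
    apply subst_congr
    intro n _
    by_cases h : n < ar i
    · simp only [pad, dif_pos h]
      exact hat_hypCompFun h₁ σ₂ (ts ⟨n, h⟩)
    · simp only [pad, dif_neg h, hat]

lemma hat_hypComp (σ₁ σ₂ : Hyp I ar) (t : Term I ar) :
    hat (hypComp σ₁ σ₂).val t = hat σ₁.val (hat σ₂.val t) :=
  hat_hypCompFun σ₁.property σ₂.val t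

lemma eval_derive {σ : (i : I) → Term I ar} (hσ : Proper σ) (A : Alg I ar)
    (v : ℕ → A.carrier) :
    ∀ t : Term I ar, (derive σ A).eval v t = A.eval v (hat σ t)
  | .var _ => rfl
  | .app i ts => by
    show A.eval _ (σ i) = A.eval v (subst _ (σ i))
    rw [eval_subst]
    apply eval_congr
    intro n hn
    have hlt := hσ i n hn
    simp only [pad, dif_pos hlt]
    exact (dif_pos hlt).trans (eval_derive hσ A v (ts ⟨n, hlt⟩))

lemma holds_derive_iff {σ : (i : I) → Term I ar} (hσ : Proper σ) (A : Alg I ar)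
    (e : Eqn I ar) : holds (derive σ A) e ↔ holds A (hat σ e.1, hat σ e.2) :=
  forall_congr' fun v => (eval_derive hσ A v e.1).symm ▸ (eval_derive hσ A v e.2).symm ▸ .rfl

lemma derive_hypId (A : Alg I ar) : derive (hypId : Hyp I ar).val A = A := by
  obtain ⟨carrier, nonempty, op⟩ := A
  simp only [derive, Alg.mk.injEq, heq_eq_eq, true_and]
  funext i args
  simp only [hypId, hypIdFun, Alg.eval]
  congr 1
  funext k
  simp [k.isLt]

section Closure

variable {M : Set (Hyp I ar)}

lemma HId_eq_IdS_chiA (K : Set (Alg I ar)) :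
    HId M K = IdS (chiA M K) := by
  ext e
  constructor
  · rintro he _ ⟨σ, hσ, A, hA, rfl⟩
    exact (holds_derive_iff σ.property A e).2 (he σ hσ A hA)
  · intro he σ hσ A hA
    exact (holds_derive_iff σ.property A e).1 (he _ ⟨σ, hσ, A, hA, rfl⟩)

lemma chiE_subset_IdS_iff {E : Set (Eqn I ar)} {K : Set (Alg I ar)} :
    chiE M E ⊆ IdS K ↔ E ⊆ HId M K := by
  constructor
  · intro h e he σ hσ
    exact h ⟨σ, hσ, e, he, rfl⟩
  · rintro h _ ⟨σ, hσ, e, he, rfl⟩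
    exact h he σ hσ

lemma subset_HMod_HId (K : Set (Alg I ar)) : K ⊆ HMod M (HId M K) :=
  fun A hA σ hσ _ he => he σ hσ A hA

lemma subset_chiA (hM : hypId ∈ M) (K : Set (Alg I ar)) : K ⊆ chiA M K :=
  fun A hA => ⟨hypId, hM, A, hA, (derive_hypId A).symm⟩

lemma subset_chiE (hM : hypId ∈ M) (E : Set (Eqn I ar)) : E ⊆ chiE M E :=
  fun e he => ⟨hypId, hM, e, he, by simp⟩

lemma HId_subset_IdS (hM : hypId ∈ M) (K : Set (Alg I ar)) : HId M K ⊆ IdS K :=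
  fun e he => by simpa using he hypId hM

lemma HMod_subset_ModS (hM : hypId ∈ M) (E : Set (Eqn I ar)) : HMod M E ⊆ ModS E :=
  fun A hA e he => by simpa using hA hypId hM e he

lemma chiA_subset_HMod_HId (hM : ∀ σ₁ ∈ M, ∀ σ₂ ∈ M, hypComp σ₁ σ₂ ∈ M)
    (K : Set (Alg I ar)) : chiA M K ⊆ HMod M (HId M K) := by
  rintro _ ⟨σ, hσ, A, hA, rfl⟩ σ' hσ' e he
  rw [holds_derive_iff σ.property]
  simpa only [hat_hypComp] using he _ (hM σ hσ σ' hσ') A hA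

end Closure

/-- Theorem 1.3, first part: for a submonoid `M` of
`Hyp(τ)` and a variety `V`, the four characterizations of `M`-solidity of `V`
are equivalent. -/
theorem mSolid_tfae
    (M : Set (Hyp I ar)) (hM : IsSubmonoid M)
    (V : Set (Alg I ar)) (hV : ModS (IdS V) = V) :
    [V = HMod M (HId M V),
     chiA M V = V,
     IdS V = HId M V,
     chiE M (IdS V) = IdS V].TFAE := by
  obtain ⟨hId, hComp⟩ := hM
  tfae_have 1 → 2 := fun h =>
    ((chiA_subset_HMod_HId hComp V).trans h.symm.subset).antisymm (subset_chiA hId V)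
  tfae_have 2 → 3 := fun h => by rw [HId_eq_IdS_chiA, h]
  tfae_have 3 → 4 := fun h =>
    (chiE_subset_IdS_iff.2 h.subset).antisymm (subset_chiE hId _)
  tfae_have 4 → 3 := fun h =>
    (chiE_subset_IdS_iff.1 h.subset).antisymm (HId_subset_IdS hId V)
  tfae_have 3 → 1 := fun h => (subset_HMod_HId V).antisymm <| calc
    HMod M (HId M V) ⊆ ModS (HId M V) := HMod_subset_ModS hId _
    _ = V := by rw [← h, hV]
  tfae_finish

end ColoredSolid
end

section
/- Let C be a coloration of W_τ(X) and let Σ ⊆ W_τ(X)² be an equational theory (i.e. Id Mod Σ = Σ). Then the following statements are equivalent: (i) CMod Σ = Mod Σ; (ii) Σ = CId CMod Σ; (iii) Σ = χ_C^E[Σ]; (iv) CId Mod Σ = Σ. -/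
/-!
Common framework: terms of a fixed type `τ = (ar i)_{i : I}`, algebras,
identities, hypersubstitutions, multi-hypersubstitutions and colorations,
following Denecke–Koppitz–Shtrakov, "Multi-hypersubstitutions and colored
solid varieties".
-/

namespace ColoredSolid

variable {I : Type} {ar : I → ℕ}

/-!
Every condition reduces to `χ_C^E[Σ] ⊆ Σ`. The operator `χ_C^E` is a closure operator on sets
of identities (the identity multi-hypersubstitution gives extensivity, and `χ_C^{e,m} ∘ χ_C^{e,n}
= χ_C^{e,m+n+1}` gives idempotence), and it is finitary: every identity of `χ_C^E[Σ]` is derived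
from a single identity of `Σ`. The latter turns `Σ ⊆ CId K` into `χ_C^E[Σ] ⊆ Id K`, while
`CMod Σ = Mod χ_C^E[Σ]` holds by definition.
-/

section ClosureOperator

variable (C : Coloration I ar)

lemma mhatAux_hypIdFun (α : List ℕ → ℕ) (a : List ℕ) (t : Term I ar) :
    mhatAux (fun _ => hypIdFun) α a t = t := by
  induction t generalizing a with
  | var n => rfl
  | app i ts ih =>
    simp only [mhatAux, hypIdFun, subst]
    congr 1
    funext k
    simp only [pad, k.isLt, dif_pos, Fin.eta]
    exact ih k _

lemma mhat_hypId (t : Term I ar) : mhat C (fun _ => hypId) t = t :=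
  mhatAux_hypIdFun (C t) [] t

lemma subset_chiCE (E : Set (Eqn I ar)) : E ⊆ chiCE C E := fun e he =>
  Set.mem_iUnion.2 ⟨0, fun _ => hypId, e, he, by rw [mhat_hypId, mhat_hypId]⟩

lemma chiCiter_mono (n : ℕ) {E₁ E₂ : Set (Eqn I ar)} (h : E₁ ⊆ E₂) :
    chiCiter C n E₁ ⊆ chiCiter C n E₂ := by
  induction n with
  | zero => rintro _ ⟨ρ, uv, huv, rfl⟩; exact ⟨ρ, uv, h huv, rfl⟩
  | succ n ih => rintro _ ⟨ρ, uv, huv, rfl⟩; exact ⟨ρ, uv, ih huv, rfl⟩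

lemma chiCE_mono {E₁ E₂ : Set (Eqn I ar)} (h : E₁ ⊆ E₂) : chiCE C E₁ ⊆ chiCE C E₂ :=
  Set.iUnion_mono fun n => chiCiter_mono C n h

lemma chiCiter_chiCiter (m n : ℕ) (E : Set (Eqn I ar)) :
    chiCiter C m (chiCiter C n E) = chiCiter C (m + n + 1) E := by
  induction m with
  | zero => rw [Nat.zero_add]; rfl
  | succ m ih =>
    rw [show m + 1 + n + 1 = (m + n + 1) + 1 by omega]
    exact congrArg (chiCe C) ih

lemma exists_mem_of_mem_chiCiter {n : ℕ} {E : Set (Eqn I ar)} {x : Eqn I ar}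
    (hx : x ∈ chiCiter C n E) : ∃ e ∈ E, x ∈ chiCiter C n {e} := by
  induction n generalizing x with
  | zero =>
    obtain ⟨ρ, uv, huv, rfl⟩ := hx
    exact ⟨uv, huv, ρ, uv, rfl, rfl⟩
  | succ n ih =>
    obtain ⟨ρ, uv, huv, rfl⟩ := hx
    obtain ⟨e, he, hue⟩ := ih huv
    exact ⟨e, he, ρ, uv, hue, rfl⟩

lemma exists_mem_of_mem_chiCE {E : Set (Eqn I ar)} {x : Eqn I ar} (hx : x ∈ chiCE C E) :
    ∃ e ∈ E, x ∈ chiCE C {e} := by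
  obtain ⟨n, hn⟩ := Set.mem_iUnion.1 hx
  obtain ⟨e, he, hxe⟩ := exists_mem_of_mem_chiCiter C hn
  exact ⟨e, he, Set.mem_iUnion.2 ⟨n, hxe⟩⟩

lemma chiCE_chiCE_subset (E : Set (Eqn I ar)) : chiCE C (chiCE C E) ⊆ chiCE C E := by
  intro x hx
  obtain ⟨m, hm⟩ := Set.mem_iUnion.1 hx
  obtain ⟨e, he, hxe⟩ := exists_mem_of_mem_chiCiter C hm
  obtain ⟨n, hn⟩ := Set.mem_iUnion.1 he
  have hx' := chiCiter_mono C m (Set.singleton_subset_iff.2 hn) hxe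
  rw [chiCiter_chiCiter] at hx'
  exact Set.mem_iUnion.2 ⟨m + n + 1, hx'⟩

lemma eq_chiCE_iff {E : Set (Eqn I ar)} : E = chiCE C E ↔ chiCE C E ⊆ E :=
  ⟨fun h => h.symm.subset, (subset_chiCE C E).antisymm⟩

end ClosureOperator

section GaloisCorrespondence

variable (C : Coloration I ar)

lemma subset_IdS_ModS (E : Set (Eqn I ar)) : E ⊆ IdS (ModS E) :=
  fun e he _ hA => hA e he

lemma CId_subset_IdS (K : Set (Alg I ar)) : CId C K ⊆ IdS K :=
  fun e he => he (subset_chiCE C {e} rfl)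

lemma subset_CId_iff {E : Set (Eqn I ar)} {K : Set (Alg I ar)} :
    E ⊆ CId C K ↔ chiCE C E ⊆ IdS K := by
  refine ⟨fun h x hx => ?_, fun h e he => (chiCE_mono C (Set.singleton_subset_iff.2 he)).trans h⟩
  obtain ⟨e, he, hxe⟩ := exists_mem_of_mem_chiCE C hx
  exact h he hxe

lemma chiCE_subset_CId_CMod (E : Set (Eqn I ar)) : chiCE C E ⊆ CId C (CMod C E) :=
  (subset_CId_iff C).2 ((chiCE_chiCE_subset C E).trans (subset_IdS_ModS _))

lemma CMod_eq_ModS_iff {E : Set (Eqn I ar)} (hE : IdS (ModS E) = E) :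
    CMod C E = ModS E ↔ chiCE C E ⊆ E := by
  refine ⟨fun h => ?_, fun h => ?_⟩
  · calc chiCE C E ⊆ IdS (CMod C E) := subset_IdS_ModS _
      _ = E := by rw [h, hE]
  · show ModS (chiCE C E) = ModS E
    rw [← (eq_chiCE_iff C).2 h]

lemma CId_ModS_eq_iff {E : Set (Eqn I ar)} (hE : IdS (ModS E) = E) :
    CId C (ModS E) = E ↔ chiCE C E ⊆ E := by
  have hle : CId C (ModS E) ⊆ E := (CId_subset_IdS C _).trans hE.subset
  rw [Set.Subset.antisymm_iff, subset_CId_iff, hE]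
  exact and_iff_right hle

end GaloisCorrespondence

variable {I : Type} {ar : I → ℕ}

/-- Theorem 4.2: for an equational theory `Σ`, the four
characterizations of being a `C`-colored hyperequational theory are
equivalent. -/
theorem colored_hyperequational_tfae
    (C : Coloration I ar) (E : Set (Eqn I ar)) (hE : IdS (ModS E) = E) :
    [CMod C E = ModS E,
     E = CId C (CMod C E),
     E = chiCE C E,
     CId C (ModS E) = E].TFAE := by
  tfae_have 1 ↔ 3 := (CMod_eq_ModS_iff C hE).trans (eq_chiCE_iff C).symm
  tfae_have 4 ↔ 3 := (CId_ModS_eq_iff C hE).trans (eq_chiCE_iff C).symm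
  tfae_have 3 → 2 := fun h3 => by
    have h := (eq_chiCE_iff C).1 h3
    rw [(CMod_eq_ModS_iff C hE).2 h, (CId_ModS_eq_iff C hE).2 h]
  tfae_have 2 → 3 := fun h2 =>
    (eq_chiCE_iff C).2 ((chiCE_subset_CId_CMod C E).trans h2.symm.subset)
  tfae_finish

end ColoredSolid
end
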